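/- arXiv:2003.04441 — 2 statements merged into one kernel-verified Lean document; each statement's English description precedes it below -/
import Mathlib

section
/- If the sequence (e_n) satisfies e_{n+1} = (1 + α/n) e_n + q for n ≥ 1 with e_1 = s, where α ∈ (0,1) and q ≥ 0, then e_n = qn/(1-α) + (s - q/(1-α)) · Γ(n+α)/(Γ(1+α)Γ(n)) for all n ≥ 1. -/
open Real

/-! The closed form is a particular solution `q x / (1 - α)` plus a multiple of
`Γ(x + α) / Γ(x)`, which solves the homogeneous recursion since
`Γ(x + 1 + α) / Γ(x + 1) = (1 + α / x) · Γ(x + α) / Γ(x)`; induction on `n` then identifies it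
with `e`. -/

noncomputable def recursionSolution (α q s x : ℝ) : ℝ :=
  q * x / (1 - α) + (s - q / (1 - α)) * (Gamma (x + α) / (Gamma (1 + α) * Gamma x))

theorem Gamma_add_add_one_div_Gamma_add_one {x a : ℝ} (hx : x ≠ 0) (hxa : x + a ≠ 0) :
    Gamma (x + 1 + a) / Gamma (x + 1) = (1 + a / x) * (Gamma (x + a) / Gamma x) := by
  rw [add_right_comm, Gamma_add_one hxa, Gamma_add_one hx]
  by_cases hΓ : Gamma x = 0
  · simp [hΓ]
  · field_simp

theorem recursionSolution_one {α : ℝ} (q s : ℝ) (hα : -1 < α) :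
    recursionSolution α q s 1 = s := by
  have hΓ : Gamma (1 + α) ≠ 0 := (Gamma_pos_of_pos (by linarith)).ne'
  simp only [recursionSolution, Gamma_one, mul_one, div_self hΓ]
  ring

theorem recursionSolution_add_one {α x : ℝ} (q s : ℝ) (hα1 : α ≠ 1) (hx : x ≠ 0)
    (hxα : x + α ≠ 0) :
    recursionSolution α q s (x + 1) = (1 + α / x) * recursionSolution α q s x + q := by
  have h1α : 1 - α ≠ 0 := sub_ne_zero.mpr hα1.symm
  have hratio := Gamma_add_add_one_div_Gamma_add_one hx hxα
  simp only [recursionSolution, div_mul_eq_div_div_swap]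
  rw [hratio]
  field_simp
  ring

theorem stmt2_general (α q s : ℝ) (hα : 0 < α) (hα1 : α < 1)
    (e : ℕ → ℝ) (he1 : e 1 = s)
    (hrec : ∀ n : ℕ, 1 ≤ n → e (n + 1) = (1 + α / n) * e n + q) :
    ∀ n : ℕ, 1 ≤ n →
      e n = q * n / (1 - α) +
        (s - q / (1 - α)) * (Real.Gamma (n + α) / (Real.Gamma (1 + α) * Real.Gamma n)) := by
  intro n hn
  induction n, hn using Nat.le_induction with
  | base =>
    rw [he1, Nat.cast_one]
    exact (recursionSolution_one q s (by linarith)).symm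
  | succ n hn ih =>
    have hnpos : (0 : ℝ) < n := by exact_mod_cast hn
    rw [hrec n hn, ih]
    push_cast
    exact (recursionSolution_add_one q s hα1.ne hnpos.ne' (by positivity)).symm

theorem stmt2 (α q s : ℝ) (hα : 0 < α) (hα1 : α < 1) (hq : 0 ≤ q)
    (e : ℕ → ℝ) (he1 : e 1 = s)
    (hrec : ∀ n : ℕ, 1 ≤ n → e (n + 1) = (1 + α / n) * e n + q) :
    ∀ n : ℕ, 1 ≤ n →
      e n = q * n / (1 - α) +
        (s - q / (1 - α)) * (Real.Gamma (n + α) / (Real.Gamma (1 + α) * Real.Gamma n)) :=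
  stmt2_general α q s hα hα1 e he1 hrec
end

section
/- For the laziest minimal random walk with parameter p ∈ (0,1) (q = 0, s = 1), the process M̂_n := H_n / a_n, where a_n = Γ(n+p)/(Γ(n)Γ(1+p)), is a martingale with respect to the natural filtration: E[M̂_{n+1} | F_n] = M̂_n for all n ≥ 1. -/
/-! `H` is a Pólya-urn-type process: `E[H_{n+1} | F_n] = H_n + p H_n / n = ((n + p) / n) H_n`.
Since `Γ(s + 1) = s Γ(s)` gives `a_{n+1} = a_n (n + p) / n`, dividing by `a_{n+1}` turns this into
the martingale property of `H_n / a_n`. -/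

open MeasureTheory ProbabilityTheory Filter Real

/-- Position of the laziest minimal random walk: `H n = X 1 + ... + X n`. -/
def lazyH {Ω : Type*} (X : ℕ → Ω → ℕ) (n : ℕ) (ω : Ω) : ℕ :=
  ∑ i ∈ Finset.Icc 1 n, X i ω

/-- `a n = Γ(n+p)/(Γ(n)Γ(1+p))`. -/
noncomputable def aSeq (p : ℝ) (n : ℕ) : ℝ :=
  Real.Gamma (n + p) / (Real.Gamma n * Real.Gamma (1 + p))

theorem aSeq_succ {p : ℝ} {n : ℕ} (hn : n ≠ 0) (hnp : (n : ℝ) + p ≠ 0) :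
    aSeq p (n + 1) = aSeq p n * ((n + p) / n) := by
  have hn' : (n : ℝ) ≠ 0 := Nat.cast_ne_zero.mpr hn
  have hΓn : Gamma (n + 1) = n * Gamma n := Gamma_add_one hn'
  have hΓnp : Gamma (n + 1 + p) = (n + p) * Gamma (n + p) := by
    rw [add_right_comm, Gamma_add_one hnp]
  simp only [aSeq, Nat.cast_add_one, hΓn, hΓnp]
  field_simp

theorem aSeq_pos {p : ℝ} (hp : -1 < p) {n : ℕ} (hn : n ≠ 0) : 0 < aSeq p n := by
  have hn' : (1 : ℝ) ≤ n := by exact_mod_cast Nat.one_le_iff_ne_zero.mpr hn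
  unfold aSeq
  have := Gamma_pos_of_pos (show (0 : ℝ) < n by linarith)
  have := Gamma_pos_of_pos (show 0 < (n : ℝ) + p by linarith)
  have := Gamma_pos_of_pos (show 0 < 1 + p by linarith)
  positivity

section lazyH

variable {Ω : Type*} {X : ℕ → Ω → ℕ}

theorem lazyH_succ (n : ℕ) (ω : Ω) : lazyH X (n + 1) ω = lazyH X n ω + X (n + 1) ω :=
  Finset.sum_Icc_succ_top (Nat.le_add_left 1 n) _

theorem lazyH_le (hX : ∀ n ω, X n ω ≤ 1) (n : ℕ) (ω : Ω) : lazyH X n ω ≤ n :=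
  calc lazyH X n ω ≤ ∑ _i ∈ Finset.Icc 1 n, 1 := Finset.sum_le_sum fun i _ => hX i ω
    _ = n := by simp

theorem measurable_lazyH {m0 : MeasurableSpace Ω} {ℱ : Filtration ℕ m0}
    (hadp : ∀ n, Measurable[ℱ n] (X n)) (n : ℕ) : Measurable[ℱ n] (lazyH X n) :=
  Finset.measurable_sum _ fun i hi => (hadp i).mono (ℱ.mono (Finset.mem_Icc.mp hi).2) le_rfl

end lazyH

theorem integrable_natCast_of_le {Ω : Type*} {m0 : MeasurableSpace Ω} {μ : Measure Ω}
    [IsFiniteMeasure μ] {Y : Ω → ℕ} (hY : Measurable Y) {C : ℕ} (hYC : ∀ ω, Y ω ≤ C) :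
    Integrable (fun ω => (Y ω : ℝ)) μ :=
  .of_bound (measurable_from_top.comp hY).aestronglyMeasurable C <|
    .of_forall fun ω => by simpa using hYC ω

theorem condExp_lazyH_succ {Ω : Type*} {m0 : MeasurableSpace Ω} {μ : Measure Ω}
    [IsFiniteMeasure μ] {ℱ : Filtration ℕ m0} {p : ℝ} {X : ℕ → Ω → ℕ}
    (hXval : ∀ n ω, X n ω ≤ 1) (hadp : ∀ n, Measurable[ℱ n] (X n)) {n : ℕ}
    (hcond : μ[(fun ω => (X (n + 1) ω : ℝ)) | ℱ n] =ᵐ[μ]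
        fun ω => p * (lazyH X n ω : ℝ) / n) :
    μ[(fun ω => (lazyH X (n + 1) ω : ℝ)) | ℱ n] =ᵐ[μ]
      fun ω => (lazyH X n ω : ℝ) + p * (lazyH X n ω : ℝ) / n := by
  have hH : Measurable[ℱ n] (fun ω => (lazyH X n ω : ℝ)) :=
    measurable_from_top.comp (measurable_lazyH hadp n)
  have hH_int : Integrable (fun ω => (lazyH X n ω : ℝ)) μ :=
    integrable_natCast_of_le ((measurable_lazyH hadp n).mono (ℱ.le n) le_rfl) (lazyH_le hXval n)
  have hX_int : Integrable (fun ω => (X (n + 1) ω : ℝ)) μ :=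
    integrable_natCast_of_le ((hadp _).mono (ℱ.le _) le_rfl) (hXval _)
  have hsplit : (fun ω => (lazyH X (n + 1) ω : ℝ))
      = (fun ω => (lazyH X n ω : ℝ)) + fun ω => (X (n + 1) ω : ℝ) := by
    funext ω
    simp [lazyH_succ]
  rw [hsplit]
  refine (condExp_add hH_int hX_int _).trans ?_
  rw [condExp_of_stronglyMeasurable (ℱ.le n) hH.stronglyMeasurable hH_int]
  exact hcond.add_left

theorem stmt3_general {Ω : Type*} {m0 : MeasurableSpace Ω} (μ : Measure Ω) [IsProbabilityMeasure μ]
    (ℱ : Filtration ℕ m0) (p : ℝ) (hp : 0 < p)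
    (X : ℕ → Ω → ℕ)
    (hXval : ∀ n ω, X n ω ≤ 1)
    (hadp : ∀ n, Measurable[ℱ n] (X n))
    (hcond : ∀ n : ℕ, 1 ≤ n →
      μ[(fun ω => (X (n + 1) ω : ℝ)) | ℱ n] =ᵐ[μ]
        fun ω => p * (lazyH X n ω : ℝ) / n) :
    ∀ n : ℕ, 1 ≤ n →
      μ[(fun ω => (lazyH X (n + 1) ω : ℝ) / aSeq p (n + 1)) | ℱ n] =ᵐ[μ]
        fun ω => (lazyH X n ω : ℝ) / aSeq p n := by
  intro n hn
  have hn0 : n ≠ 0 := Nat.one_le_iff_ne_zero.mp hn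
  have hnp : (n : ℝ) + p ≠ 0 := by positivity
  have ha := (aSeq_pos (by linarith) hn0).ne'
  have hdiv : (fun ω => (lazyH X (n + 1) ω : ℝ) / aSeq p (n + 1))
      = (aSeq p (n + 1))⁻¹ • fun ω => (lazyH X (n + 1) ω : ℝ) := by
    funext ω
    simp [div_eq_inv_mul]
  rw [hdiv]
  filter_upwards [condExp_smul (aSeq p (n + 1))⁻¹ (fun ω => (lazyH X (n + 1) ω : ℝ)) (ℱ n),
    condExp_lazyH_succ hXval hadp (hcond n hn)] with ω hsmul hstep
  rw [hsmul, Pi.smul_apply, hstep, aSeq_succ hn0 hnp, smul_eq_mul]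
  field_simp

theorem stmt3 {Ω : Type*} {m0 : MeasurableSpace Ω} (μ : Measure Ω) [IsProbabilityMeasure μ]
    (ℱ : Filtration ℕ m0) (p : ℝ) (hp : 0 < p) (hp1 : p < 1)
    (X : ℕ → Ω → ℕ)
    (hXval : ∀ n ω, X n ω ≤ 1)
    (hX1 : ∀ᵐ ω ∂μ, X 1 ω = 1)
    (hadp : ∀ n, Measurable[ℱ n] (X n))
    (hcond : ∀ n : ℕ, 1 ≤ n →
      μ[(fun ω => (X (n + 1) ω : ℝ)) | ℱ n] =ᵐ[μ]
        fun ω => p * (lazyH X n ω : ℝ) / n) :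
    ∀ n : ℕ, 1 ≤ n →
      μ[(fun ω => (lazyH X (n + 1) ω : ℝ) / aSeq p (n + 1)) | ℱ n] =ᵐ[μ]
        fun ω => (lazyH X n ω : ℝ) / aSeq p n :=
  stmt3_general μ ℱ p hp X hXval hadp hcond
end
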